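/- arXiv:2403.12404 — 4 statements merged into one kernel-verified Lean document; each statement's English description precedes it below -/
import Mathlib

section
/- Let $\ell : \mathbb{R}^n \to \mathbb{R}$ be a measurable function bounded by $C$ (i.e. $|\ell(x)| \le C$ for all $x$), and let $\sigma > 0$. Define the Gaussian-smoothed function $\hat{\ell}(x) = \mathbb{E}_{\epsilon \sim \mathcal{N}(0, I_n)}[\ell(x + \sigma \epsilon)]$. Then $\hat{\ell}$ is Lipschitz with Lipschitz constant at most $C\sqrt{2/(\pi \sigma^2)}$. -/
/-!
Writing `K` for the density of `𝒩(0, σ² I)`, translation invariance of Lebesgue measure gives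
`|ℓ̂ x - ℓ̂ y| ≤ C ∫ |K w - K (w - (x - y))| dw`. Since `K` is rotation invariant, `x - y` may be
taken along the first coordinate axis; there `K` factorises and the integral becomes the
one-dimensional `∫ |g t - g (t - a)| dt` for the Gaussian density `g` and `a = ‖x - y‖`. As `g` is
even and decreasing in `|t|`, this equals `2 ∫_{-a/2}^{a/2} g ≤ 2 a g 0 = a √(2 / (π σ²))`.
-/

open MeasureTheory ProbabilityTheory Real Set
open scoped NNReal

lemma rpow_neg_natCast_div_two_eq_inv_sqrt_pow {x : ℝ} (hx : 0 ≤ x) (n : ℕ) :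
    x ^ (-(n : ℝ) / 2) = (√x)⁻¹ ^ n := by
  rw [show -(n : ℝ) / 2 = 1 / 2 * -(n : ℝ) by ring, rpow_mul hx, ← sqrt_eq_rpow,
    rpow_neg (sqrt_nonneg x), rpow_natCast, inv_pow]

lemma two_mul_inv_sqrt_two_mul_pi_mul (x : ℝ) : 2 * (√(2 * π * x))⁻¹ = √(2 / (π * x)) := by
  rw [show 2 / (π * x) = 2 ^ 2 / (2 * π * x) by ring, sqrt_div (sq_nonneg 2),
    sqrt_sq zero_le_two, div_eq_mul_inv]

section Shift

variable {E : Type*} [NormedAddCommGroup E] [NormedSpace ℝ E]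

lemma setIntegral_Iic_comp_sub_right (f : ℝ → E) (a b : ℝ) :
    ∫ t in Iic b, f (t - a) = ∫ t in Iic (b - a), f t := by
  rw [← sub_add_cancel b a, ← preimage_sub_const_Iic, add_sub_cancel_right]
  exact (measurePreserving_sub_right volume a).setIntegral_preimage_emb
    (measurableEmbedding_subRight a) f _

lemma setIntegral_Ioi_comp_sub_right (f : ℝ → E) (a b : ℝ) :
    ∫ t in Ioi b, f (t - a) = ∫ t in Ioi (b - a), f t := by
  rw [← sub_add_cancel b a, ← preimage_sub_const_Ioi, add_sub_cancel_right]
  exact (measurePreserving_sub_right volume a).setIntegral_preimage_emb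
    (measurableEmbedding_subRight a) f _

end Shift

section RadiallyAntitone

variable {f : ℝ → ℝ}

/-- The integrand `f t - f (t - a)` is nonnegative left of `a / 2` and nonpositive right of it,
and each half integrates to the mass of `f` on `[-a/2, a/2]`. -/
lemma integral_abs_sub_comp_sub_right_eq (hf : Integrable f)
    (hmono : ∀ s t, |t| ≤ |s| → f s ≤ f t) {a : ℝ} (ha : 0 ≤ a) :
    ∫ t, |f t - f (t - a)| = 2 * ∫ t in -(a / 2)..a / 2, f t := by
  have hfa : Integrable (fun t ↦ f (t - a)) := hf.comp_sub_right a
  have hleft : ∫ t in Iic (a / 2), |f t - f (t - a)| = ∫ t in -(a / 2)..a / 2, f t := by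
    have hpos : ∀ t ∈ Iic (a / 2), |f t - f (t - a)| = f t - f (t - a) := fun t ht ↦
      abs_of_nonneg <| sub_nonneg.2 <| hmono _ _ <| sq_le_sq.1 <| by
        simp only [mem_Iic] at ht; nlinarith
    rw [setIntegral_congr_fun measurableSet_Iic hpos,
      integral_sub hf.integrableOn hfa.integrableOn, ← intervalIntegral.integral_Iic_sub_Iic
        hf.integrableOn hf.integrableOn, setIntegral_Iic_comp_sub_right, half_sub]
  have hright : ∫ t in Ioi (a / 2), |f t - f (t - a)| = ∫ t in -(a / 2)..a / 2, f t := by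
    have hneg : ∀ t ∈ Ioi (a / 2), |f t - f (t - a)| = f (t - a) - f t := fun t ht ↦ by
      rw [abs_sub_comm]
      exact abs_of_nonneg <| sub_nonneg.2 <| hmono _ _ <| sq_le_sq.1 <| by
        simp only [mem_Ioi] at ht; nlinarith
    rw [setIntegral_congr_fun measurableSet_Ioi hneg,
      integral_sub hfa.integrableOn hf.integrableOn, ← intervalIntegral.integral_Ioi_sub_Ioi
        hf.integrableOn (by linarith), setIntegral_Ioi_comp_sub_right, half_sub]
  have hint : Integrable (fun t ↦ |f t - f (t - a)|) := (hf.sub hfa).abs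
  rw [← intervalIntegral.integral_Iic_add_Ioi (b := a / 2) hint.integrableOn hint.integrableOn,
    hleft, hright, two_mul]

lemma integral_abs_sub_comp_sub_right_le (hf : Integrable f)
    (hmono : ∀ s t, |t| ≤ |s| → f s ≤ f t) {a : ℝ} (ha : 0 ≤ a) :
    ∫ t, |f t - f (t - a)| ≤ 2 * a * f 0 := by
  have hle : ∫ t in -(a / 2)..a / 2, f t ≤ ∫ _ in -(a / 2)..a / 2, f 0 :=
    intervalIntegral.integral_mono_on (by linarith) hf.intervalIntegrable
      intervalIntegrable_const fun t _ ↦ hmono t 0 (by simp)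
  rw [intervalIntegral.integral_const, smul_eq_mul] at hle
  rw [integral_abs_sub_comp_sub_right_eq hf hmono ha]
  linarith

end RadiallyAntitone

lemma abs_integral_mul_comp_sub_sub_integral_mul_comp_sub_le {G : Type*} [AddCommGroup G]
    [MeasurableSpace G] [MeasurableAdd G] [MeasurableNeg G] {μ : Measure G} [μ.IsNegInvariant]
    [μ.IsAddLeftInvariant] {ℓ K : G → ℝ} {C : ℝ} (hℓ : AEStronglyMeasurable ℓ μ)
    (hbound : ∀ z, |ℓ z| ≤ C) (hK : Integrable K μ) (x y : G) :
    |∫ z, ℓ z * K (x - z) ∂μ - ∫ z, ℓ z * K (y - z) ∂μ| ≤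
      C * ∫ w, |K w - K (w - (x - y))| ∂μ := by
  have hKx := hK.comp_sub_left x
  have hKy := hK.comp_sub_left y
  have hbound' : ∀ᵐ z ∂μ, ‖ℓ z‖ ≤ C := .of_forall hbound
  rw [← integral_sub (hKx.bdd_mul hℓ hbound') (hKy.bdd_mul hℓ hbound'), ← integral_const_mul,
    ← integral_sub_left_eq_self (fun w ↦ C * |K w - K (w - (x - y))|) μ x, ← Real.norm_eq_abs]
  simp only [sub_sub_sub_cancel_left, ← mul_sub]
  refine norm_integral_le_of_norm_le (((hKx.sub hKy).abs).const_mul C) (.of_forall fun z ↦ ?_)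
  rw [Real.norm_eq_abs, abs_mul]
  exact mul_le_mul_of_nonneg_right (hbound z) (abs_nonneg _)

namespace ProbabilityTheory

lemma gaussianPDFReal_zero_le_of_abs_le (v : ℝ≥0) {s t : ℝ} (h : |t| ≤ |s|) :
    gaussianPDFReal 0 v s ≤ gaussianPDFReal 0 v t := by
  simp only [gaussianPDFReal, sub_zero]
  gcongr _ * rexp ?_
  exact div_le_div_of_nonneg_right (neg_le_neg (sq_le_sq.2 h)) (by positivity)

lemma integral_abs_gaussianPDFReal_sub_comp_sub_right_le (v : ℝ≥0) {a : ℝ} (ha : 0 ≤ a) :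
    ∫ t, |gaussianPDFReal 0 v t - gaussianPDFReal 0 v (t - a)| ≤ √(2 / (π * v)) * a := by
  refine (integral_abs_sub_comp_sub_right_le (integrable_gaussianPDFReal 0 v)
    (fun _ _ ↦ gaussianPDFReal_zero_le_of_abs_le v) ha).trans_eq ?_
  rw [← two_mul_inv_sqrt_two_mul_pi_mul, gaussianPDFReal, sub_self, zero_pow two_ne_zero,
    neg_zero, zero_div, exp_zero, mul_one]
  ring

noncomputable def gaussianPDFEuclidean {ι : Type*} [Fintype ι] (v : ℝ≥0)
    (w : EuclideanSpace ℝ ι) : ℝ :=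
  ∏ i, gaussianPDFReal 0 v (w i)

section Euclidean

variable {ι : Type*} [Fintype ι]

lemma gaussianPDFEuclidean_eq (v : ℝ≥0) (w : EuclideanSpace ℝ ι) :
    gaussianPDFEuclidean v w =
      (2 * π * v) ^ (-(Fintype.card ι : ℝ) / 2) * exp (-‖w‖ ^ 2 / (2 * v)) := by
  rw [rpow_neg_natCast_div_two_eq_inv_sqrt_pow (by positivity), EuclideanSpace.norm_sq_eq,
    neg_div, Finset.sum_div, ← Finset.sum_neg_distrib, exp_sum, ← Finset.card_univ,
    ← Finset.prod_const, ← Finset.prod_mul_distrib]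
  simp [gaussianPDFEuclidean, gaussianPDFReal, neg_div]

lemma integrable_gaussianPDFEuclidean (v : ℝ≥0) :
    Integrable (gaussianPDFEuclidean (ι := ι) v) := by
  rw [← (PiLp.volume_preserving_toLp ι).integrable_comp_emb
    (MeasurableEquiv.toLp 2 _).measurableEmbedding]
  exact Integrable.fintype_prod fun _ ↦ integrable_gaussianPDFReal 0 v

lemma integral_abs_gaussianPDFEuclidean_sub_comp_sub_eq_of_norm_eq (v : ℝ≥0)
    {u u' : EuclideanSpace ℝ ι} (h : ‖u‖ = ‖u'‖) :
    ∫ w, |gaussianPDFEuclidean v w - gaussianPDFEuclidean v (w - u)| =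
      ∫ w, |gaussianPDFEuclidean v w - gaussianPDFEuclidean v (w - u')| := by
  set T := (ℝ ∙ (u - u'))ᗮ.reflection
  have hTu : T u = u' := Submodule.reflection_sub h
  rw [← T.measurePreserving.integral_comp T.toHomeomorph.measurableEmbedding
    (fun w ↦ |gaussianPDFEuclidean v w - gaussianPDFEuclidean v (w - u')|)]
  congr 1 with w
  rw [← hTu, ← map_sub]
  simp only [gaussianPDFEuclidean_eq, LinearIsometryEquiv.norm_map]

end Euclidean

lemma integral_abs_gaussianPDFEuclidean_sub_comp_sub_single_le {m : ℕ} {v : ℝ≥0} (hv : v ≠ 0)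
    {a : ℝ} (ha : 0 ≤ a) :
    ∫ w : EuclideanSpace ℝ (Fin (m + 1)),
        |gaussianPDFEuclidean v w - gaussianPDFEuclidean v (w - EuclideanSpace.single 0 a)| ≤
      √(2 / (π * v)) * a := by
  let g := gaussianPDFReal 0 v
  rw [← (PiLp.volume_preserving_toLp _).integral_comp
    (MeasurableEquiv.toLp 2 _).measurableEmbedding fun w ↦
      |gaussianPDFEuclidean v w - gaussianPDFEuclidean v (w - EuclideanSpace.single 0 a)|]
  have hprod : ∀ x : Fin (m + 1) → ℝ,
      |gaussianPDFEuclidean v (WithLp.toLp 2 x) -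
          gaussianPDFEuclidean v (WithLp.toLp 2 x - EuclideanSpace.single 0 a)| =
        ∏ i, (Fin.cons (fun t ↦ |g t - g (t - a)|) (fun _ ↦ g) : Fin (m + 1) → ℝ → ℝ) i (x i) := by
    intro x
    simp [gaussianPDFEuclidean, Fin.prod_univ_succ, ← sub_mul, abs_mul, g,
      Finset.prod_nonneg, gaussianPDFReal_nonneg]
  simp_rw [hprod]
  rw [integral_fin_nat_prod_volume_eq_prod, Fin.prod_univ_succ]
  simp only [Fin.cons_zero, Fin.cons_succ, g, integral_gaussianPDFReal_eq_one 0 hv,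
    Finset.prod_const_one, mul_one]
  exact integral_abs_gaussianPDFReal_sub_comp_sub_right_le v ha

lemma integral_abs_gaussianPDFEuclidean_sub_comp_sub_le {n : ℕ} {v : ℝ≥0} (hv : v ≠ 0)
    (u : EuclideanSpace ℝ (Fin n)) :
    ∫ w, |gaussianPDFEuclidean v w - gaussianPDFEuclidean v (w - u)| ≤ √(2 / (π * v)) * ‖u‖ := by
  cases n with
  | zero => simp [Subsingleton.elim u 0]
  | succ m =>
    rw [integral_abs_gaussianPDFEuclidean_sub_comp_sub_eq_of_norm_eq v
      (u' := EuclideanSpace.single 0 ‖u‖) (by simp)]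
    exact integral_abs_gaussianPDFEuclidean_sub_comp_sub_single_le hv (norm_nonneg u)

end ProbabilityTheory

/-- Gaussian smoothing of a function bounded by `C` is `C * √(2/(π σ²))`-Lipschitz. -/
theorem gaussian_smoothing_lipschitz (n : ℕ) (C σ : ℝ) (hσ : 0 < σ)
    (ℓ : EuclideanSpace ℝ (Fin n) → ℝ) (hmeas : Measurable ℓ)
    (hbound : ∀ x, |ℓ x| ≤ C)
    (ℓhat : EuclideanSpace ℝ (Fin n) → ℝ)
    (hℓhat : ∀ x, ℓhat x =
      ∫ z, ℓ z * ((2 * Real.pi * σ ^ 2) ^ (-(n : ℝ) / 2) *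
        Real.exp (-‖x - z‖ ^ 2 / (2 * σ ^ 2)))) :
    ∀ x y, |ℓhat x - ℓhat y| ≤ C * Real.sqrt (2 / (Real.pi * σ ^ 2)) * ‖x - y‖ := by
  intro x y
  let v : ℝ≥0 := ⟨σ ^ 2, sq_nonneg σ⟩
  have hv : v ≠ 0 := by rw [← NNReal.coe_ne_zero]; exact pow_ne_zero 2 hσ.ne'
  have hK : ∀ x, ℓhat x = ∫ z, ℓ z * gaussianPDFEuclidean v (x - z) := fun x ↦ by
    rw [hℓhat]
    congr 1 with z
    rw [gaussianPDFEuclidean_eq, Fintype.card_fin]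
    rfl
  rw [hK, hK]
  calc _ ≤ C * ∫ w, |gaussianPDFEuclidean v w - gaussianPDFEuclidean v (w - (x - y))| :=
        abs_integral_mul_comp_sub_sub_integral_mul_comp_sub_le hmeas.aestronglyMeasurable hbound
          (integrable_gaussianPDFEuclidean v) x y
    _ ≤ C * (√(2 / (π * v)) * ‖x - y‖) :=
        mul_le_mul_of_nonneg_left (integral_abs_gaussianPDFEuclidean_sub_comp_sub_le hv _)
          ((abs_nonneg _).trans (hbound 0))
    _ = C * √(2 / (π * σ ^ 2)) * ‖x - y‖ := by rw [mul_assoc]; rfl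
end

section
/- Let $\ell_0 : \mathbb{R}^n \to [0,\infty)$ be differentiable and satisfy the PL condition $\|\nabla \ell_0(u)\|^2 \ge \mu \ell_0(u)$. Let $T : \mathbb{R}^n \to \mathbb{R}^n$ be differentiable and suppose that at every point $x$ the Jacobian $DT(x)$ satisfies $DT(x) = \Sigma(x)/(\sigma^2\sqrt{\alpha})$ for a symmetric positive semidefinite matrix $\Sigma(x)$ whose smallest eigenvalue is at least $\lambda_{\min} > 0$. Then the composed function $\ell(x) = \ell_0(T(x))$ satisfies the PL condition $\|\nabla \ell(x)\|^2 \ge \frac{\mu \lambda_{\min}^2}{\sigma^4 \alpha} \ell(x)$. -/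
open scoped RealInnerProductSpace

/-!
The chain rule gives `∇ℓ(x) = DT(x)^* ∇ℓ₀(T x)`, and `DT(x)^* = DT(x) = c⁻¹ Σ(x)` with
`c = σ²√α` because `Σ(x)` is symmetric. Coercivity `λ_min ‖v‖² ≤ ⟪Σ v, v⟫` together with
Cauchy–Schwarz gives `λ_min ‖v‖ ≤ ‖Σ v‖`, so `‖∇ℓ(x)‖² ≥ (λ_min / c)² ‖∇ℓ₀(T x)‖²`, and the PL
inequality for `ℓ₀` finishes, since `c² = σ⁴α`.
-/

section

variable {E F : Type*} [NormedAddCommGroup E] [InnerProductSpace ℝ E]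
  [NormedAddCommGroup F] [InnerProductSpace ℝ F] [CompleteSpace F]

theorem HasGradientAt.comp_hasFDerivAt [CompleteSpace E] {f : F → ℝ} {g : F} {T : E → F}
    {A : E →L[ℝ] F} {x : E} (hf : HasGradientAt f g (T x)) (hT : HasFDerivAt T A x) :
    HasGradientAt (f ∘ T) (A.adjoint g) x := by
  rw [hasGradientAt_iff_hasFDerivAt] at hf ⊢
  refine (hf.comp x hT).congr_fderiv (ContinuousLinearMap.ext fun v => ?_)
  simp [ContinuousLinearMap.adjoint_inner_left]

theorem gradient_comp_of_fderiv_eq_smul_of_isSymmetric {f : F → ℝ} {T : F → F}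
    {S : F →L[ℝ] F} {c : ℝ} {x : F} (hf : DifferentiableAt ℝ f (T x))
    (hT : DifferentiableAt ℝ T x) (hTS : fderiv ℝ T x = c • S)
    (hS : (S : F →ₗ[ℝ] F).IsSymmetric) :
    gradient (fun y => f (T y)) x = c • S (gradient f (T x)) := by
  have hT' : HasFDerivAt T (c • S) x := hTS ▸ hT.hasFDerivAt
  have hadj : (c • S).adjoint = c • S := by
    rw [map_smulₛₗ, hS.clm_adjoint_eq, starRingEnd_apply, star_trivial]
  have h := (hf.hasGradientAt.comp_hasFDerivAt hT').gradient
  rwa [hadj] at h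

end

theorem mul_norm_le_norm_apply_of_le_inner {E : Type*} [NormedAddCommGroup E]
    [InnerProductSpace ℝ E] {S : E →L[ℝ] E} {m : ℝ} (hS : ∀ v, m * ‖v‖ ^ 2 ≤ ⟪S v, v⟫)
    (v : E) : m * ‖v‖ ≤ ‖S v‖ := by
  rcases (norm_nonneg v).eq_or_lt with hv | hv
  · simp [← hv]
  · have : m * ‖v‖ * ‖v‖ ≤ ‖S v‖ * ‖v‖ := by
      nlinarith [hS v, real_inner_le_norm (S v) v]
    exact le_of_mul_le_mul_right this hv

theorem pl_transfer_through_tweedie_general (n : ℕ) (μ lmin σ α : ℝ)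
    (hlmin : 0 < lmin) (hα : 0 < α)
    (ℓ0 : EuclideanSpace ℝ (Fin n) → ℝ) (hℓ0diff : Differentiable ℝ ℓ0)
    (hPL : ∀ u, μ * ℓ0 u ≤ ‖gradient ℓ0 u‖ ^ 2)
    (T : EuclideanSpace ℝ (Fin n) → EuclideanSpace ℝ (Fin n))
    (hTdiff : Differentiable ℝ T)
    (hJac : ∀ x, ∃ S : EuclideanSpace ℝ (Fin n) →L[ℝ] EuclideanSpace ℝ (Fin n),
      fderiv ℝ T x = (σ ^ 2 * Real.sqrt α)⁻¹ • S ∧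
      (∀ u v, ⟪S u, v⟫ = ⟪u, S v⟫) ∧
      (∀ v, lmin * ‖v‖ ^ 2 ≤ ⟪S v, v⟫)) :
    ∀ x, μ * lmin ^ 2 / (σ ^ 4 * α) * ℓ0 (T x) ≤
      ‖gradient (fun y => ℓ0 (T y)) x‖ ^ 2 := by
  intro x
  obtain ⟨S, hTS, hsymm, hcoer⟩ := hJac x
  set c := σ ^ 2 * Real.sqrt α
  set g := gradient ℓ0 (T x)
  have hc : c ^ 2 = σ ^ 4 * α := by rw [mul_pow, Real.sq_sqrt hα.le]; ring
  have hSg : lmin * ‖g‖ ≤ ‖S g‖ := mul_norm_le_norm_apply_of_le_inner hcoer g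
  rw [gradient_comp_of_fderiv_eq_smul_of_isSymmetric (hℓ0diff _) (hTdiff x) hTS hsymm,
    norm_smul, Real.norm_eq_abs, mul_pow, sq_abs, inv_pow, hc]
  calc μ * lmin ^ 2 / (σ ^ 4 * α) * ℓ0 (T x)
      = (σ ^ 4 * α)⁻¹ * (lmin ^ 2 * (μ * ℓ0 (T x))) := by ring
    _ ≤ (σ ^ 4 * α)⁻¹ * (lmin * ‖g‖) ^ 2 := by
        rw [mul_pow]; gcongr; exact hPL _
    _ ≤ (σ ^ 4 * α)⁻¹ * ‖S g‖ ^ 2 := by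
        gcongr

/-- The PL condition transfers through composition with a map whose Jacobian is
`Σ(x)/(σ²√α)` for a symmetric PSD matrix `Σ(x)` with eigenvalues at least `λmin`. -/
theorem pl_transfer_through_tweedie (n : ℕ) (μ lmin σ α : ℝ)
    (hμ : 0 < μ) (hlmin : 0 < lmin) (hσ : 0 < σ) (hα : 0 < α)
    (ℓ0 : EuclideanSpace ℝ (Fin n) → ℝ) (hℓ0diff : Differentiable ℝ ℓ0)
    (hℓ0nonneg : ∀ u, 0 ≤ ℓ0 u)
    (hPL : ∀ u, μ * ℓ0 u ≤ ‖gradient ℓ0 u‖ ^ 2)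
    (T : EuclideanSpace ℝ (Fin n) → EuclideanSpace ℝ (Fin n))
    (hTdiff : Differentiable ℝ T)
    (hJac : ∀ x, ∃ S : EuclideanSpace ℝ (Fin n) →L[ℝ] EuclideanSpace ℝ (Fin n),
      fderiv ℝ T x = (σ ^ 2 * Real.sqrt α)⁻¹ • S ∧
      (∀ u v, ⟪S u, v⟫ = ⟪u, S v⟫) ∧
      (∀ v, lmin * ‖v‖ ^ 2 ≤ ⟪S v, v⟫)) :
    ∀ x, μ * lmin ^ 2 / (σ ^ 4 * α) * ℓ0 (T x) ≤
      ‖gradient (fun y => ℓ0 (T y)) x‖ ^ 2 :=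
  pl_transfer_through_tweedie_general n μ lmin σ α hlmin hα ℓ0 hℓ0diff hPL T hTdiff hJac
end

section
/- Let $X$ and $Y$ be random vectors in $\mathbb{R}^n$ defined on a common probability space with $\|X - Y\| \le B$ almost surely, and let $N \sim \mathcal{N}(0, \sigma^2 I_n)$ be independent of $(X, Y)$. Then the total variation distance between the laws of $X + N$ and $Y + N$ satisfies $\mathrm{TV}(X + N, Y + N) \le (1 - 2Q(B/(2\sigma)))\, \mathbb{P}(X \ne Y)$, where $Q(a) = \mathbb{P}(Z \ge a)$ for standard normal $Z$. -/
open MeasureTheory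

/-- Total variation distance between two measures. -/
noncomputable def tvDist {E : Type*} [MeasurableSpace E] (μ ν : Measure E) : ℝ :=
  ⨆ A : {s : Set E // MeasurableSet s}, |(μ A.1).toReal - (ν A.1).toReal|

/-- The isotropic Gaussian measure `𝒩(x, σ² Iₙ)` on `ℝⁿ`, given by its density. -/
noncomputable def gaussianE (n : ℕ) (x : EuclideanSpace ℝ (Fin n)) (σ : ℝ) :
    Measure (EuclideanSpace ℝ (Fin n)) :=
  volume.withDensity fun z => ENNReal.ofReal
    ((2 * Real.pi * σ ^ 2) ^ (-(n : ℝ) / 2) * Real.exp (-‖z - x‖ ^ 2 / (2 * σ ^ 2)))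

/-- The Gaussian tail probability `Q(a) = ℙ(Z ≥ a)`, `Z ∼ 𝒩(0,1)`. -/
noncomputable def gaussQ (a : ℝ) : ℝ :=
  ((ProbabilityTheory.gaussianReal 0 1) (Set.Ici a)).toReal

/-!
Conditionally on `(X, Y)`, the law of `X + N` is a mixture of the Gaussians `𝒩(X, σ² I)`, so for a
measurable `A` the difference `ℙ(X + N ∈ A) - ℙ(Y + N ∈ A)` is the expectation of
`𝒩(X, σ² I)(A) - 𝒩(Y, σ² I)(A)`, which vanishes on `{X = Y}`. For `x ≠ y`, Scheffé's argument
shows that `𝒩(x, σ² I)(A) - 𝒩(y, σ² I)(A)` is largest when `A` is the half-space of points closer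
to `x` than to `y`. Projecting onto the unit vector along `x - y`, the two Gaussians give this
half-space mass `1 - Q(‖x - y‖/(2σ))` and `Q(‖x - y‖/(2σ))`. Since `Q` is antitone and
`‖X - Y‖ ≤ B`, the difference is at most `1 - 2Q(B/(2σ))` on `{X ≠ Y}`.
-/

open ProbabilityTheory Real
open scoped RealInnerProductSpace ENNReal

section General

variable {α Ω : Type*} [MeasurableSpace α] [MeasurableSpace Ω]

lemma tvDist_le_of_forall {μ ν : Measure α} {c : ℝ}
    (h : ∀ A, MeasurableSet A → μ.real A - ν.real A ≤ c ∧ ν.real A - μ.real A ≤ c) :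
    tvDist μ ν ≤ c :=
  ciSup_le fun A => abs_sub_le_iff.2 (h A.1 A.2)

lemma withDensity_apply_le_of_subset {ν : Measure α} {f g : α → ℝ≥0∞} (hg : Measurable g)
    {S : Set α} (hS : MeasurableSet S) (hSfg : S ⊆ {a | f a ≤ g a}) :
    ν.withDensity f S ≤ ν.withDensity g S := by
  rw [withDensity_apply _ hS, withDensity_apply _ hS]
  exact setLIntegral_mono hg hSfg

lemma withDensity_real_sub_le_setOf_le {ν : Measure α} {f g : α → ℝ≥0∞} (hf : Measurable f)
    (hg : Measurable g) [IsFiniteMeasure (ν.withDensity f)] [IsFiniteMeasure (ν.withDensity g)]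
    {A : Set α} (hA : MeasurableSet A) :
    (ν.withDensity f).real A - (ν.withDensity g).real A ≤
      (ν.withDensity f).real {a | g a ≤ f a} - (ν.withDensity g).real {a | g a ≤ f a} := by
  set H := {a | g a ≤ f a}
  have hH : MeasurableSet H := measurableSet_le hg hf
  have hAH : (ν.withDensity f).real (A \ H) ≤ (ν.withDensity g).real (A \ H) :=
    ENNReal.toReal_mono (measure_ne_top _ _) <| withDensity_apply_le_of_subset hg (hA.diff hH)
      fun a ha => (not_le.1 (show ¬ g a ≤ f a from ha.2)).le
  have hHA : (ν.withDensity g).real (H \ A) ≤ (ν.withDensity f).real (H \ A) :=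
    ENNReal.toReal_mono (measure_ne_top _ _) <| withDensity_apply_le_of_subset hf (hH.diff hA)
      fun a ha => ha.1
  have hfA := measureReal_inter_add_sdiff (μ := ν.withDensity f) (s := A) hH
  have hgA := measureReal_inter_add_sdiff (μ := ν.withDensity g) (s := A) hH
  have hfH := measureReal_inter_add_sdiff (μ := ν.withDensity f) (s := H) hA
  have hgH := measureReal_inter_add_sdiff (μ := ν.withDensity g) (s := H) hA
  rw [Set.inter_comm] at hfH hgH
  linarith

lemma MeasureTheory.Measure.conv_apply {M : Type*} [AddMonoid M] [MeasurableSpace M]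
    [MeasurableAdd₂ M] (μ ν : Measure M) [SFinite ν] {A : Set M} (hA : MeasurableSet A) :
    (μ ∗ ν) A = ∫⁻ x, ν.map (x + ·) A ∂μ := by
  rw [Measure.conv, Measure.map_apply measurable_add hA, Measure.prod_apply (measurable_add hA)]
  exact lintegral_congr fun x => (Measure.map_apply (measurable_const_add x) hA).symm

lemma measurable_map_const_add_apply {M : Type*} [AddMonoid M] [MeasurableSpace M]
    [MeasurableAdd₂ M] (ν : Measure M) [SFinite ν] {A : Set M} (hA : MeasurableSet A) :
    Measurable fun x => ν.map (x + ·) A := by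
  simp_rw [Measure.map_apply (measurable_const_add _) hA]
  exact measurable_measure_prodMk_left (measurable_add hA)

lemma ProbabilityTheory.IndepFun.measureReal_map_add {M : Type*} [AddMonoid M] [MeasurableSpace M]
    [MeasurableAdd₂ M] {P : Measure Ω} [IsFiniteMeasure P] {X N : Ω → M}
    (hX : Measurable X) (hN : Measurable N) (hXN : IndepFun X N P) {A : Set M}
    (hA : MeasurableSet A) :
    (P.map fun ω => X ω + N ω).real A = ∫ ω, ((P.map N).map (X ω + ·)).real A ∂P := by
  have hmeas := measurable_map_const_add_apply (P.map N) hA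
  calc (P.map fun ω => X ω + N ω).real A = ((P.map X ∗ P.map N) A).toReal := by
        rw [← hXN.map_add_eq_map_conv_map hX hN]; rfl
    _ = ∫ x, ((P.map N).map (x + ·)).real A ∂(P.map X) := by
        rw [Measure.conv_apply _ _ hA, ← integral_toReal hmeas.aemeasurable
          (ae_of_all _ fun _ => measure_lt_top _ _)]
        rfl
    _ = ∫ ω, ((P.map N).map (X ω + ·)).real A ∂P :=
        integral_map hX.aemeasurable hmeas.ennreal_toReal.aestronglyMeasurable

lemma integral_comp_sub_integral_comp_le_mul_measureReal_ne {E : Type*} [MeasurableSpace E]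
    [MeasurableEq E] {P : Measure Ω} [IsFiniteMeasure P] {X Y : Ω → E} (hX : Measurable X) (hY : Measurable Y)
    {g : E → ℝ} (hgX : Integrable (fun ω => g (X ω)) P) (hgY : Integrable (fun ω => g (Y ω)) P)
    {C : ℝ} (hC : ∀ᵐ ω ∂P, X ω ≠ Y ω → g (X ω) - g (Y ω) ≤ C) :
    ∫ ω, g (X ω) ∂P - ∫ ω, g (Y ω) ∂P ≤ C * P.real {ω | X ω ≠ Y ω} := by
  have hS : MeasurableSet {ω | X ω ≠ Y ω} := (measurableSet_eq_fun hX hY).compl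
  rw [← integral_sub hgX hgY, mul_comm, ← smul_eq_mul, ← integral_indicator_const C hS]
  refine integral_mono_ae (hgX.sub hgY) ((integrable_const C).indicator hS) ?_
  filter_upwards [hC] with ω hω
  by_cases hXY : X ω = Y ω
  · simp [hXY]
  · simpa [Set.indicator_of_mem (show ω ∈ {ω | X ω ≠ Y ω} from hXY)] using hω hXY

end General

section Gaussian

variable {n : ℕ} {σ : ℝ}

noncomputable def gaussianDensity (n : ℕ) (x : EuclideanSpace ℝ (Fin n)) (σ : ℝ)
    (z : EuclideanSpace ℝ (Fin n)) : ℝ :=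
  (2 * π * σ ^ 2) ^ (-(n : ℝ) / 2) * exp (-‖z - x‖ ^ 2 / (2 * σ ^ 2))

lemma gaussianE_eq_withDensity (x : EuclideanSpace ℝ (Fin n)) :
    gaussianE n x σ = volume.withDensity fun z => ENNReal.ofReal (gaussianDensity n x σ z) :=
  rfl

lemma gaussianDensity_pos (hσ : 0 < σ) (x z : EuclideanSpace ℝ (Fin n)) :
    0 < gaussianDensity n x σ z := by
  unfold gaussianDensity; positivity

lemma measurable_gaussianDensity (x : EuclideanSpace ℝ (Fin n)) :
    Measurable (gaussianDensity n x σ) := by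
  unfold gaussianDensity; fun_prop

lemma gaussianDensity_le_gaussianDensity_iff (hσ : 0 < σ) (x y z : EuclideanSpace ℝ (Fin n)) :
    gaussianDensity n y σ z ≤ gaussianDensity n x σ z ↔ ‖z - x‖ ≤ ‖z - y‖ := by
  unfold gaussianDensity
  rw [mul_le_mul_iff_right₀ (by positivity), exp_le_exp,
    div_le_div_iff_of_pos_right (by positivity), neg_le_neg_iff, sq_le_sq₀ (norm_nonneg _) (norm_nonneg _)]

lemma integral_gaussianDensity_zero (hσ : 0 < σ) :
    ∫ z, gaussianDensity n 0 σ z = 1 := by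
  have h2πσ : 0 < 2 * π * σ ^ 2 := by positivity
  have hexp (z : EuclideanSpace ℝ (Fin n)) :
      -‖z - 0‖ ^ 2 / (2 * σ ^ 2) = -(2 * σ ^ 2)⁻¹ * ‖z‖ ^ 2 := by
    rw [sub_zero]; ring
  simp_rw [gaussianDensity, hexp]
  rw [integral_const_mul, GaussianFourier.integral_rexp_neg_mul_sq_norm (by positivity),
    finrank_euclideanSpace_fin, div_inv_eq_mul, ← mul_assoc, mul_comm π, neg_div,
    rpow_neg h2πσ.le, inv_mul_cancel₀ (rpow_pos_of_pos h2πσ _).ne']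

lemma isProbabilityMeasure_gaussianE_zero (hσ : 0 < σ) :
    IsProbabilityMeasure (gaussianE n 0 σ) := by
  have hint := Integrable.of_integral_ne_zero
    ((integral_gaussianDensity_zero (n := n) hσ).trans_ne one_ne_zero)
  constructor
  rw [gaussianE_eq_withDensity, withDensity_apply _ MeasurableSet.univ, Measure.restrict_univ,
    ← ofReal_integral_eq_lintegral_ofReal hint
      (ae_of_all _ fun z => (gaussianDensity_pos hσ 0 z).le),
    integral_gaussianDensity_zero hσ, ENNReal.ofReal_one]

lemma charFun_gaussianE_zero (hσ : 0 < σ) (t : EuclideanSpace ℝ (Fin n)) :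
    charFun (gaussianE n 0 σ) t = Complex.exp (-(σ ^ 2 * ‖t‖ ^ 2) / 2) := by
  have h2πσ : 0 < 2 * π * σ ^ 2 := by positivity
  have hb : 0 < ((2 * σ ^ 2 : ℝ)⁻¹ : ℂ).re := by
    rw [← Complex.ofReal_inv, Complex.ofReal_re]; positivity
  have hintegrand (z : EuclideanSpace ℝ (Fin n)) :
      (ENNReal.ofReal (gaussianDensity n 0 σ z)).toReal • Complex.exp (⟪z, t⟫ * Complex.I) =
      ((2 * π * σ ^ 2) ^ (-(n : ℝ) / 2) : ℝ) *
        Complex.exp (-((2 * σ ^ 2 : ℝ)⁻¹ : ℂ) * ‖z‖ ^ 2 + Complex.I * ⟪t, z⟫) := by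
    rw [ENNReal.toReal_ofReal (gaussianDensity_pos hσ 0 z).le, gaussianDensity, Complex.real_smul,
      Complex.ofReal_mul, mul_assoc, Complex.ofReal_exp, ← Complex.exp_add, real_inner_comm,
      sub_zero]
    congr 2
    push_cast
    ring
  have hπ : (π / ((2 * σ ^ 2 : ℝ)⁻¹ : ℂ)) ^ ((n : ℂ) / 2) =
      (((2 * π * σ ^ 2) ^ ((n : ℝ) / 2) : ℝ) : ℂ) := by
    rw [Complex.ofReal_cpow h2πσ.le]
    push_cast
    congr 1
    field_simp
  rw [charFun_apply, gaussianE_eq_withDensity, integral_withDensity_eq_integral_toReal_smul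
    (measurable_gaussianDensity 0).ennreal_ofReal (ae_of_all _ fun _ => ENNReal.ofReal_lt_top)]
  simp_rw [hintegrand]
  rw [integral_const_mul, GaussianFourier.integral_cexp_neg_mul_sq_norm_add hb,
    finrank_euclideanSpace_fin, ← mul_assoc, hπ, ← Complex.ofReal_mul, neg_div, rpow_neg h2πσ.le,
    inv_mul_cancel₀ (rpow_pos_of_pos h2πσ _).ne', Complex.ofReal_one, one_mul]
  congr 1
  push_cast
  field_simp
  rw [Complex.I_sq]
  ring

-- Identifying `gaussianE` with a rescaled `stdGaussian` gives access to Mathlib's theory of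
-- Gaussian measures, in particular to the laws of their one-dimensional projections.
lemma gaussianE_zero_eq_map_smul_stdGaussian (hσ : 0 < σ) :
    gaussianE n 0 σ = (stdGaussian (EuclideanSpace ℝ (Fin n))).map (σ • ·) := by
  have := isProbabilityMeasure_gaussianE_zero (n := n) hσ
  have := Measure.isProbabilityMeasure_map (μ := stdGaussian (EuclideanSpace ℝ (Fin n)))
    (measurable_const_smul σ).aemeasurable
  refine Measure.ext_of_charFun (funext fun t => ?_)
  have hnorm : (‖σ • t‖ : ℂ) ^ 2 = σ ^ 2 * ‖t‖ ^ 2 := by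
    rw [norm_smul, Real.norm_eq_abs, Complex.ofReal_mul, mul_pow, ← Complex.ofReal_pow, sq_abs,
      Complex.ofReal_pow]
  rw [charFun_gaussianE_zero hσ, charFun_map_smul, charFun_stdGaussian, hnorm]

lemma map_const_add_gaussianE_zero (x : EuclideanSpace ℝ (Fin n)) :
    (gaussianE n 0 σ).map (x + ·) = gaussianE n x σ := by
  ext A hA
  have hdens : Measurable fun z => ENNReal.ofReal (gaussianDensity n x σ z) :=
    (measurable_gaussianDensity x).ennreal_ofReal
  rw [Measure.map_apply (measurable_const_add x) hA, gaussianE_eq_withDensity,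
    gaussianE_eq_withDensity, withDensity_apply _ hA,
    withDensity_apply _ (measurable_const_add x hA)]
  conv_rhs => rw [← (measurePreserving_add_left volume x).map_eq,
    setLIntegral_map hA hdens (measurable_const_add x)]
  simp [gaussianDensity]

lemma gaussianE_eq_map_stdGaussian (hσ : 0 < σ) (x : EuclideanSpace ℝ (Fin n)) :
    gaussianE n x σ = (stdGaussian (EuclideanSpace ℝ (Fin n))).map fun w => x + σ • w := by
  rw [← map_const_add_gaussianE_zero, gaussianE_zero_eq_map_smul_stdGaussian hσ,
    Measure.map_map (measurable_const_add x) (measurable_const_smul σ)]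
  rfl

lemma isProbabilityMeasure_gaussianE (hσ : 0 < σ) (x : EuclideanSpace ℝ (Fin n)) :
    IsProbabilityMeasure (gaussianE n x σ) := by
  rw [gaussianE_eq_map_stdGaussian hσ]
  exact Measure.isProbabilityMeasure_map (by fun_prop)

lemma stdGaussian_map_inner {E : Type*} [NormedAddCommGroup E] [InnerProductSpace ℝ E]
    [FiniteDimensional ℝ E] [MeasurableSpace E] [BorelSpace E] {u : E} (hu : ‖u‖ = 1) :
    (stdGaussian E).map (fun w => ⟪u, w⟫) = gaussianReal 0 1 := by
  have h := IsGaussian.map_eq_gaussianReal (μ := stdGaussian E) (innerSL ℝ u)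
  rw [integral_strongDual_stdGaussian, variance_dual_stdGaussian, innerSL_apply_norm, hu] at h
  simpa using h

lemma gaussianE_setOf_le_inner (hσ : 0 < σ) (x : EuclideanSpace ℝ (Fin n))
    {u : EuclideanSpace ℝ (Fin n)} (hu : ‖u‖ = 1) (c : ℝ) :
    gaussianE n x σ {z | c ≤ ⟪u, z - x⟫} = gaussianReal 0 1 (Set.Ici (c / σ)) := by
  have hpre : (fun w => x + σ • w) ⁻¹' {z | c ≤ ⟪u, z - x⟫} =
      (fun w => ⟪u, w⟫) ⁻¹' Set.Ici (c / σ) := by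
    ext w
    simp [inner_smul_right, div_le_iff₀' hσ]
  rw [gaussianE_eq_map_stdGaussian hσ, Measure.map_apply (by fun_prop)
    (measurableSet_le measurable_const (by fun_prop)), hpre,
    ← Measure.map_apply (by fun_prop) measurableSet_Ici, stdGaussian_map_inner hu]

lemma gaussQ_antitone : Antitone gaussQ := fun _ _ hab =>
  ENNReal.toReal_mono (measure_ne_top _ _) (measure_mono (Set.Ici_subset_Ici.2 hab))

lemma gaussianReal_real_Ici_neg (a : ℝ) :
    (gaussianReal 0 1).real (Set.Ici (-a)) = 1 - gaussQ a := by
  have := nullSingletonClass_gaussianReal (μ := 0) one_ne_zero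
  have hneg : (gaussianReal 0 1).map (fun t => -t) = gaussianReal 0 1 := by
    simpa using gaussianReal_map_neg (μ := 0) (v := 1)
  have hsymm : (gaussianReal 0 1).real (Set.Ici (-a)) = (gaussianReal 0 1).real (Set.Iic a) := by
    conv_lhs => rw [← hneg, map_measureReal_apply measurable_neg measurableSet_Ici]
    rw [Set.neg_preimage, Set.neg_Ici, neg_neg]
  rw [hsymm, gaussQ, ← measureReal_def, ← measureReal_congr Ioi_ae_eq_Ici, ← Set.compl_Iic,
    measureReal_compl measurableSet_Iic, probReal_univ]
  ring

lemma norm_le_norm_add_iff {E : Type*} [NormedAddCommGroup E] [InnerProductSpace ℝ E] {d : E}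
    (hd : d ≠ 0) (v : E) : ‖v‖ ≤ ‖v + d‖ ↔ -(‖d‖ / 2) ≤ ⟪‖d‖⁻¹ • d, v⟫ := by
  have hd' : 0 < ‖d‖ := norm_pos_iff.2 hd
  rw [← sq_le_sq₀ (norm_nonneg _) (norm_nonneg _), norm_add_sq_real, real_inner_smul_left,
    le_inv_mul_iff₀ hd', real_inner_comm]
  constructor <;> intro h <;> nlinarith

lemma gaussianE_real_sub_le (hσ : 0 < σ) {x y : EuclideanSpace ℝ (Fin n)} (hxy : x ≠ y)
    {A : Set (EuclideanSpace ℝ (Fin n))} (hA : MeasurableSet A) :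
    (gaussianE n x σ).real A - (gaussianE n y σ).real A ≤
      1 - 2 * gaussQ (‖x - y‖ / (2 * σ)) := by
  have : IsProbabilityMeasure
      (volume.withDensity fun z => ENNReal.ofReal (gaussianDensity n x σ z)) :=
    isProbabilityMeasure_gaussianE hσ x
  have : IsProbabilityMeasure
      (volume.withDensity fun z => ENNReal.ofReal (gaussianDensity n y σ z)) :=
    isProbabilityMeasure_gaussianE hσ y
  set d := x - y with hd_def
  set u := ‖d‖⁻¹ • d
  have hd : d ≠ 0 := sub_ne_zero.2 hxy
  have hu : ‖u‖ = 1 := norm_smul_inv_norm hd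
  have hud : ⟪u, d⟫ = ‖d‖ := by
    rw [real_inner_smul_left, real_inner_self_eq_norm_sq, sq,
      inv_mul_cancel_left₀ (norm_ne_zero_iff.2 hd)]
  set H := {z | ‖z - x‖ ≤ ‖z - y‖}
  have hHx : H = {z | -(‖d‖ / 2) ≤ ⟪u, z - x⟫} := by
    ext z
    have h := norm_le_norm_add_iff hd (z - x)
    rwa [hd_def, sub_add_sub_cancel, ← hd_def] at h
  have hHy : H = {z | ‖d‖ / 2 ≤ ⟪u, z - y⟫} := by
    ext z
    have hz : z - x = z - y - d := by rw [hd_def]; abel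
    rw [hHx]
    change _ ≤ ⟪u, z - x⟫ ↔ _ ≤ ⟪u, z - y⟫
    rw [hz, inner_sub_right, hud]
    constructor <;> intro h <;> linarith
  have hScheffe := withDensity_real_sub_le_setOf_le (ν := volume)
    (measurable_gaussianDensity (σ := σ) x).ennreal_ofReal
    (measurable_gaussianDensity (σ := σ) y).ennreal_ofReal hA
  simp_rw [ENNReal.ofReal_le_ofReal_iff (gaussianDensity_pos hσ x _).le,
    gaussianDensity_le_gaussianDensity_iff hσ, ← gaussianE_eq_withDensity] at hScheffe
  have hxH : (gaussianE n x σ).real H = 1 - gaussQ (‖d‖ / (2 * σ)) := by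
    rw [measureReal_def, hHx, gaussianE_setOf_le_inner hσ x hu, ← measureReal_def, neg_div,
      div_div, gaussianReal_real_Ici_neg]
  have hyH : (gaussianE n y σ).real H = gaussQ (‖d‖ / (2 * σ)) := by
    rw [measureReal_def, hHy, gaussianE_setOf_le_inner hσ y hu, div_div, gaussQ]
  change _ ≤ (gaussianE n x σ).real H - (gaussianE n y σ).real H at hScheffe
  rw [hxH, hyH] at hScheffe
  linarith

lemma measurable_gaussianE_apply (hσ : 0 < σ) {A : Set (EuclideanSpace ℝ (Fin n))}
    (hA : MeasurableSet A) : Measurable fun x => gaussianE n x σ A := by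
  have := isProbabilityMeasure_gaussianE_zero (n := n) hσ
  simpa only [map_const_add_gaussianE_zero] using
    measurable_map_const_add_apply (gaussianE n 0 σ) hA

lemma measureReal_map_add_gaussian_sub_le (hσ : 0 < σ) {B : ℝ} {Ω : Type*} [MeasurableSpace Ω]
    {P : Measure Ω} [IsFiniteMeasure P] {X Y N : Ω → EuclideanSpace ℝ (Fin n)}
    (hX : Measurable X) (hY : Measurable Y) (hN : Measurable N)
    (hbound : ∀ᵐ ω ∂P, ‖X ω - Y ω‖ ≤ B) (hNlaw : P.map N = gaussianE n 0 σ)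
    (hXN : IndepFun X N P) (hYN : IndepFun Y N P)
    {A : Set (EuclideanSpace ℝ (Fin n))} (hA : MeasurableSet A) :
    (P.map fun ω => X ω + N ω).real A - (P.map fun ω => Y ω + N ω).real A ≤
      (1 - 2 * gaussQ (B / (2 * σ))) * P.real {ω | X ω ≠ Y ω} := by
  have hintegrable {Z : Ω → EuclideanSpace ℝ (Fin n)} (hZ : Measurable Z) :
      Integrable (fun ω => (gaussianE n (Z ω) σ).real A) P := by
    refine .of_bound
      ((measurable_gaussianE_apply hσ hA).comp hZ).ennreal_toReal.aestronglyMeasurable 1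
      (ae_of_all _ fun ω => ?_)
    have := isProbabilityMeasure_gaussianE hσ (Z ω)
    rw [Real.norm_of_nonneg measureReal_nonneg]
    exact measureReal_le_one
  rw [hXN.measureReal_map_add hX hN hA, hYN.measureReal_map_add hY hN hA, hNlaw]
  simp_rw [map_const_add_gaussianE_zero]
  refine integral_comp_sub_integral_comp_le_mul_measureReal_ne
    (g := fun x => (gaussianE n x σ).real A) hX hY (hintegrable hX) (hintegrable hY) ?_
  filter_upwards [hbound] with ω hω hXY
  have hQ : gaussQ (B / (2 * σ)) ≤ gaussQ (‖X ω - Y ω‖ / (2 * σ)) :=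
    gaussQ_antitone (div_le_div_of_nonneg_right hω (by positivity))
  linarith [gaussianE_real_sub_le hσ hXY hA]

end Gaussian

theorem tv_noise_contraction_general (n : ℕ) (σ B : ℝ) (hσ : 0 < σ)
    {Ω : Type*} [MeasurableSpace Ω] (P : Measure Ω) [IsProbabilityMeasure P]
    (X Y N : Ω → EuclideanSpace ℝ (Fin n))
    (hX : Measurable X) (hY : Measurable Y) (hN : Measurable N)
    (hbound : ∀ᵐ ω ∂P, ‖X ω - Y ω‖ ≤ B)
    (hNlaw : Measure.map N P = gaussianE n 0 σ)
    (hindep : ProbabilityTheory.IndepFun (fun ω => (X ω, Y ω)) N P) :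
    tvDist (Measure.map (fun ω => X ω + N ω) P) (Measure.map (fun ω => Y ω + N ω) P) ≤
      (1 - 2 * gaussQ (B / (2 * σ))) * (P {ω | X ω ≠ Y ω}).toReal := by
  have hXN : IndepFun X N P := hindep.comp measurable_fst measurable_id
  have hYN : IndepFun Y N P := hindep.comp measurable_snd measurable_id
  have hbound' : ∀ᵐ ω ∂P, ‖Y ω - X ω‖ ≤ B := hbound.mono fun _ h => by rwa [norm_sub_rev]
  have hne : {ω | Y ω ≠ X ω} = {ω | X ω ≠ Y ω} := Set.ext fun _ => ne_comm
  refine tvDist_le_of_forall fun A hA => ⟨?_, ?_⟩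
  · exact measureReal_map_add_gaussian_sub_le hσ hX hY hN hbound hNlaw hXN hYN hA
  · rw [← measureReal_def, ← hne]
    exact measureReal_map_add_gaussian_sub_le hσ hY hX hN hbound' hNlaw hYN hXN hA

/-- Adding independent Gaussian noise to a coupled pair `(X, Y)` with `‖X - Y‖ ≤ B`
a.s. contracts the total variation distance between the laws:
`TV(X+N, Y+N) ≤ (1 - 2Q(B/(2σ))) ℙ(X ≠ Y)`. -/
theorem tv_noise_contraction (n : ℕ) (σ B : ℝ) (hσ : 0 < σ) (hB : 0 ≤ B)
    {Ω : Type*} [MeasurableSpace Ω] (P : Measure Ω) [IsProbabilityMeasure P]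
    (X Y N : Ω → EuclideanSpace ℝ (Fin n))
    (hX : Measurable X) (hY : Measurable Y) (hN : Measurable N)
    (hbound : ∀ᵐ ω ∂P, ‖X ω - Y ω‖ ≤ B)
    (hNlaw : Measure.map N P = gaussianE n 0 σ)
    (hindep : ProbabilityTheory.IndepFun (fun ω => (X ω, Y ω)) N P) :
    tvDist (Measure.map (fun ω => X ω + N ω) P) (Measure.map (fun ω => Y ω + N ω) P) ≤
      (1 - 2 * gaussQ (B / (2 * σ))) * (P {ω | X ω ≠ Y ω}).toReal :=
  tv_noise_contraction_general n σ B hσ P X Y N hX hY hN hbound hNlaw hindep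
end

section
/- In the setting of Tweedie's formula, with $x = \sqrt{\alpha}x_0 + \sigma\epsilon$, $x_0 \sim \pi$ compactly supported, $\epsilon \sim \mathcal{N}(0, I_n)$, and $q$ the density of $x$, the second-order Miyasawa relation holds: $\alpha\,\mathrm{Cov}[x_0\mid x] = \sigma^2(I_n + \sigma^2 \nabla^2 \log q(x))$, this being the Jacobian of the map $x \mapsto (x + \sigma^2\nabla\log q(x))/\sqrt{\alpha}$ expressed in terms of $\mathrm{Cov}[x_0 \mid x]$. In particular $I_n + \sigma^2\nabla^2\log q(x)$ is positive semidefinite. -/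
open MeasureTheory
open scoped RealInnerProductSpace

namespace MiyasawaAux

abbrev E (n : ℕ) := EuclideanSpace ℝ (Fin n)

noncomputable def C (n : ℕ) (σ : ℝ) : ℝ := (2 * Real.pi * σ ^ 2) ^ (-(n : ℝ) / 2)

variable {n : ℕ} {σ : ℝ} {φ : E n → ℝ}

lemma C_pos (hσ : 0 < σ) : 0 < C n σ := by
  apply Real.rpow_pos_of_pos; positivity

lemma gauss_pos (hσ : 0 < σ)
    (hφ : ∀ z : E n, φ z = (2 * Real.pi * σ ^ 2) ^ (-(n : ℝ) / 2) *
      Real.exp (-‖z‖ ^ 2 / (2 * σ ^ 2)))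
    (z : E n) : 0 < φ z := by
  rw [hφ]
  exact mul_pos (C_pos hσ) (Real.exp_pos _)

lemma gauss_cont
    (hφ : ∀ z : E n, φ z = (2 * Real.pi * σ ^ 2) ^ (-(n : ℝ) / 2) *
      Real.exp (-‖z‖ ^ 2 / (2 * σ ^ 2))) : Continuous φ := by
  have h : φ = fun z : E n => (2 * Real.pi * σ ^ 2) ^ (-(n : ℝ) / 2) *
      Real.exp (-‖z‖ ^ 2 / (2 * σ ^ 2)) := funext hφ
  rw [h]; fun_prop

lemma gauss_le (hσ : 0 < σ)
    (hφ : ∀ z : E n, φ z = (2 * Real.pi * σ ^ 2) ^ (-(n : ℝ) / 2) *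
      Real.exp (-‖z‖ ^ 2 / (2 * σ ^ 2)))
    (z : E n) : φ z ≤ C n σ := by
  rw [hφ]
  have h1 : Real.exp (-‖z‖ ^ 2 / (2 * σ ^ 2)) ≤ 1 := by
    rw [Real.exp_le_one_iff]
    apply div_nonpos_of_nonpos_of_nonneg (neg_nonpos.mpr (by positivity))
    positivity
  calc C n σ * Real.exp (-‖z‖ ^ 2 / (2 * σ ^ 2)) ≤ C n σ * 1 :=
        mul_le_mul_of_nonneg_left h1 (C_pos hσ).le
    _ = C n σ := mul_one _

-- ‖z‖² φ(z) ≤ 2σ² C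
lemma gauss_sq_mul_le (hσ : 0 < σ)
    (hφ : ∀ z : E n, φ z = (2 * Real.pi * σ ^ 2) ^ (-(n : ℝ) / 2) *
      Real.exp (-‖z‖ ^ 2 / (2 * σ ^ 2)))
    (z : E n) : ‖z‖ ^ 2 * φ z ≤ 2 * σ ^ 2 * C n σ := by
  by_cases hz : ‖z‖ = 0
  · rw [hφ, hz]
    have := C_pos (n := n) hσ
    have := Real.exp_pos (-‖z‖ ^ 2 / (2 * σ ^ 2))
    nlinarith
  · have hz0 : 0 < ‖z‖ := lt_of_le_of_ne (norm_nonneg z) (Ne.symm hz)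
    have hx : (0:ℝ) < ‖z‖ ^ 2 / (2 * σ ^ 2) := by positivity
    have h1 : Real.exp (-‖z‖ ^ 2 / (2 * σ ^ 2)) ≤ (‖z‖ ^ 2 / (2 * σ ^ 2))⁻¹ := by
      rw [neg_div, Real.exp_neg]
      exact inv_anti₀ hx (by nlinarith [Real.add_one_le_exp (‖z‖ ^ 2 / (2 * σ ^ 2))])
    calc ‖z‖ ^ 2 * φ z
        = ‖z‖ ^ 2 * (C n σ * Real.exp (-‖z‖ ^ 2 / (2 * σ ^ 2))) := by rw [hφ]; rfl
      _ ≤ ‖z‖ ^ 2 * (C n σ * (‖z‖ ^ 2 / (2 * σ ^ 2))⁻¹) := by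
          apply mul_le_mul_of_nonneg_left _ (by positivity)
          exact mul_le_mul_of_nonneg_left h1 (C_pos hσ).le
      _ = 2 * σ ^ 2 * C n σ := by
          rw [inv_div]
          field_simp

-- ‖z‖ φ(z) ≤ 2σ C
lemma gauss_norm_mul_le (hσ : 0 < σ)
    (hφ : ∀ z : E n, φ z = (2 * Real.pi * σ ^ 2) ^ (-(n : ℝ) / 2) *
      Real.exp (-‖z‖ ^ 2 / (2 * σ ^ 2)))
    (z : E n) : ‖z‖ * φ z ≤ 2 * σ * C n σ := by
  have hφz := gauss_pos hσ hφ z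
  have hC := C_pos (n := n) hσ
  by_cases hz : ‖z‖ ≤ 2 * σ
  · have := gauss_le hσ hφ z
    nlinarith [norm_nonneg z]
  · push_neg at hz
    have h2 := gauss_sq_mul_le hσ hφ z
    have hz0 : 0 < ‖z‖ := by nlinarith
    -- ‖z‖ * φ z = (‖z‖^2 * φ z)/‖z‖ ≤ 2σ²C/(2σ) = σ C ≤ 2σC
    have : ‖z‖ * φ z ≤ 2 * σ ^ 2 * C n σ / ‖z‖ := by
      rw [le_div_iff₀ hz0]
      nlinarith
    have h3 : 2 * σ ^ 2 * C n σ / ‖z‖ ≤ 2 * σ ^ 2 * C n σ / (2 * σ) := by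
      apply div_le_div_of_nonneg_left (by positivity) (by positivity) hz.le
    have h4 : 2 * σ ^ 2 * C n σ / (2 * σ) = σ * C n σ := by
      field_simp
    have h5 : σ * C n σ ≤ 2 * σ * C n σ := by nlinarith [mul_pos hσ hC]
    linarith

/-- Gradient of the Gaussian kernel. -/
noncomputable def grad1 (σ : ℝ) (φ : E n → ℝ) (z : E n) : E n := (-(σ ^ 2)⁻¹ * φ z) • z

lemma grad1_cont (hφc : Continuous φ) : Continuous (grad1 σ φ) :=
  (continuous_const.mul hφc).smul continuous_id

lemma grad1_norm_le (hσ : 0 < σ)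
    (hφ : ∀ z : E n, φ z = (2 * Real.pi * σ ^ 2) ^ (-(n : ℝ) / 2) *
      Real.exp (-‖z‖ ^ 2 / (2 * σ ^ 2)))
    (z : E n) : ‖grad1 σ φ z‖ ≤ 2 * C n σ / σ := by
  have hφz := gauss_pos hσ hφ z
  have h1 := gauss_norm_mul_le hσ hφ z
  have : ‖grad1 σ φ z‖ = (σ ^ 2)⁻¹ * (φ z * ‖z‖) := by
    rw [grad1, norm_smul, Real.norm_eq_abs,
      abs_of_nonpos (by nlinarith [mul_pos (inv_pos.mpr (show (0:ℝ) < σ^2 by positivity)) hφz])]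
    ring
  rw [this, ← mul_comm ‖z‖ (φ z)]
  rw [div_eq_mul_inv, show (σ^2)⁻¹ = σ⁻¹ * σ⁻¹ by rw [sq, mul_inv]]
  have hσi : (0:ℝ) < σ⁻¹ := inv_pos.mpr hσ
  calc σ⁻¹ * σ⁻¹ * (‖z‖ * φ z) ≤ σ⁻¹ * σ⁻¹ * (2 * σ * C n σ) := by
        apply mul_le_mul_of_nonneg_left h1 (by positivity)
    _ = 2 * C n σ * σ⁻¹ * (σ * σ⁻¹) := by ring
    _ = 2 * C n σ * σ⁻¹ := by rw [mul_inv_cancel₀ (ne_of_gt hσ), mul_one]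

lemma gauss_hasFDerivAt (hσ : 0 < σ)
    (hφ : ∀ z : E n, φ z = (2 * Real.pi * σ ^ 2) ^ (-(n : ℝ) / 2) *
      Real.exp (-‖z‖ ^ 2 / (2 * σ ^ 2)))
    (z : E n) : HasFDerivAt φ (innerSL ℝ (grad1 σ φ z)) z := by
  have h1 : HasFDerivAt (fun y : E n => ‖y‖ ^ 2) (2 • innerSL ℝ z) z := by
    simpa using (hasFDerivAt_id z).norm_sq
  have h2 : HasFDerivAt (fun y : E n => -‖y‖ ^ 2 / (2 * σ ^ 2))
      ((-(2 * σ ^ 2)⁻¹) • (2 • innerSL ℝ z)) z := by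
    have heq : (fun y : E n => -‖y‖ ^ 2 / (2 * σ ^ 2))
        = fun y : E n => (-(2 * σ ^ 2)⁻¹) * ‖y‖ ^ 2 := by
      funext y; rw [div_eq_mul_inv]; ring
    rw [heq]
    exact h1.const_mul _
  have h3 := (h2.exp).const_mul ((2 * Real.pi * σ ^ 2) ^ (-(n : ℝ) / 2))
  have hfun : φ = fun y : E n => (2 * Real.pi * σ ^ 2) ^ (-(n : ℝ) / 2) *
      Real.exp (-‖y‖ ^ 2 / (2 * σ ^ 2)) := funext hφ
  have hgoal : innerSL ℝ (grad1 σ φ z) = (2 * Real.pi * σ ^ 2) ^ (-(n : ℝ) / 2) •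
      (Real.exp (-‖z‖ ^ 2 / (2 * σ ^ 2)) • ((-(2 * σ ^ 2)⁻¹) • (2 • innerSL ℝ z))) := by
    ext w
    simp only [innerSL_apply_apply, grad1, real_inner_smul_left, ContinuousLinearMap.smul_apply,
      smul_eq_mul, ContinuousLinearMap.coe_smul', Pi.smul_apply, nsmul_eq_mul, Nat.cast_ofNat]
    rw [hφ z, mul_inv]
    ring
  rw [hgoal]
  rw [hfun]
  exact h3

/-- Second derivative of the Gaussian kernel. -/
noncomputable def W2 (σ : ℝ) (φ : E n → ℝ) (z : E n) : E n →L[ℝ] E n :=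
  (-(σ ^ 2)⁻¹ * φ z) • ContinuousLinearMap.id ℝ (E n)
    + ((-(σ ^ 2)⁻¹) • innerSL ℝ (grad1 σ φ z)).smulRight z

lemma grad1_hasFDerivAt (hσ : 0 < σ)
    (hφ : ∀ z : E n, φ z = (2 * Real.pi * σ ^ 2) ^ (-(n : ℝ) / 2) *
      Real.exp (-‖z‖ ^ 2 / (2 * σ ^ 2)))
    (z : E n) : HasFDerivAt (grad1 σ φ) (W2 σ φ z) z := by
  have h1 : HasFDerivAt (fun y : E n => -(σ ^ 2)⁻¹ * φ y)
      ((-(σ ^ 2)⁻¹) • innerSL ℝ (grad1 σ φ z)) z :=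
    (gauss_hasFDerivAt hσ hφ z).const_mul _
  have h2 := h1.smul (hasFDerivAt_id z)
  exact h2

lemma W2_cont (hφc : Continuous φ) : Continuous (fun z : E n => W2 σ φ z) := by
  apply Continuous.add
  · exact (continuous_const.mul hφc).smul continuous_const
  · exact (isBoundedBilinearMap_smulRight (𝕜 := ℝ)).continuous.comp
      (((continuous_const : Continuous fun _ : E n => (-(σ ^ 2)⁻¹ : ℝ)).smul ((innerSL ℝ).continuous.comp (grad1_cont hφc))).prodMk
        continuous_id)

lemma W2_norm_le (hσ : 0 < σ)
    (hφ : ∀ z : E n, φ z = (2 * Real.pi * σ ^ 2) ^ (-(n : ℝ) / 2) *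
      Real.exp (-‖z‖ ^ 2 / (2 * σ ^ 2)))
    (z : E n) : ‖W2 σ φ z‖ ≤ 3 * C n σ / σ ^ 2 := by
  have hφz := gauss_pos hσ hφ z
  have hC := C_pos (n := n) hσ
  have hs2 : (0:ℝ) < σ ^ 2 := by positivity
  have h1 : ‖(-(σ ^ 2)⁻¹ * φ z) • ContinuousLinearMap.id ℝ (E n)‖ ≤ (σ ^ 2)⁻¹ * C n σ := by
    rw [norm_smul (α := ℝ) (β := E n →L[ℝ] E n) _ _, Real.norm_eq_abs]
    calc |(-(σ ^ 2)⁻¹ * φ z)| * ‖ContinuousLinearMap.id ℝ (E n)‖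
        ≤ ((σ ^ 2)⁻¹ * φ z) * 1 := by
          apply mul_le_mul _ ContinuousLinearMap.norm_id_le (norm_nonneg _) (by positivity)
          rw [abs_of_nonpos (by nlinarith [mul_pos (inv_pos.mpr hs2) hφz])]
          apply le_of_eq; ring
      _ ≤ (σ ^ 2)⁻¹ * C n σ := by
          rw [mul_one]
          exact mul_le_mul_of_nonneg_left (gauss_le hσ hφ z) (by positivity)
  have h2 : ‖((-(σ ^ 2)⁻¹) • innerSL ℝ (grad1 σ φ z)).smulRight z‖ ≤ 2 * (σ ^ 2)⁻¹ * C n σ := by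
    rw [ContinuousLinearMap.norm_smulRight_apply,
      norm_smul (α := ℝ) (β := E n →L[ℝ] ℝ) _ _, innerSL_apply_norm, Real.norm_eq_abs]
    have hg : ‖grad1 σ φ z‖ = (σ ^ 2)⁻¹ * (φ z * ‖z‖) := by
      rw [grad1, norm_smul, Real.norm_eq_abs,
        abs_of_nonpos (by nlinarith [mul_pos (inv_pos.mpr hs2) hφz])]
      ring
    rw [hg]
    have habs : |(-(σ ^ 2)⁻¹)| = (σ ^ 2)⁻¹ := by
      rw [abs_of_nonpos (by nlinarith [inv_pos.mpr hs2])]; ring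
    rw [habs]
    have h3 := gauss_sq_mul_le hσ hφ z
    have hnn : (0:ℝ) ≤ ‖z‖ := norm_nonneg z
    calc (σ ^ 2)⁻¹ * ((σ ^ 2)⁻¹ * (φ z * ‖z‖)) * ‖z‖
        = (σ ^ 2)⁻¹ * (σ ^ 2)⁻¹ * (‖z‖ ^ 2 * φ z) := by ring
      _ ≤ (σ ^ 2)⁻¹ * (σ ^ 2)⁻¹ * (2 * σ ^ 2 * C n σ) := by
          apply mul_le_mul_of_nonneg_left h3 (by positivity)
      _ = 2 * (σ ^ 2)⁻¹ * C n σ * ((σ ^ 2) * (σ ^ 2)⁻¹) := by ring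
      _ = 2 * (σ ^ 2)⁻¹ * C n σ := by rw [mul_inv_cancel₀ (ne_of_gt hs2), mul_one]
  calc ‖W2 σ φ z‖ ≤ ‖(-(σ ^ 2)⁻¹ * φ z) • ContinuousLinearMap.id ℝ (E n)‖
        + ‖((-(σ ^ 2)⁻¹) • innerSL ℝ (grad1 σ φ z)).smulRight z‖ := norm_add_le _ _
    _ ≤ (σ ^ 2)⁻¹ * C n σ + 2 * (σ ^ 2)⁻¹ * C n σ := add_le_add h1 h2
    _ = 3 * C n σ / σ ^ 2 := by field_simp; ring

lemma W2_inner (u v z : E n) :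
    ⟪W2 σ φ z u, v⟫ =
      ((σ ^ 2)⁻¹) ^ 2 * (φ z * (⟪z, u⟫ * ⟪z, v⟫)) - (σ ^ 2)⁻¹ * (φ z * ⟪u, v⟫) := by
  simp only [W2, ContinuousLinearMap.add_apply, ContinuousLinearMap.smul_apply,
    ContinuousLinearMap.coe_id', id_eq, ContinuousLinearMap.smulRight_apply,
    innerSL_apply_apply, grad1, real_inner_smul_left, smul_eq_mul, inner_add_left,
    real_inner_smul_left]
  ring

section meas

variable {P0 : Measure (E n)} [IsProbabilityMeasure P0]

lemma ae_mem_of_compl_null {K : Set (E n)} (hK0 : P0 Kᶜ = 0) : ∀ᵐ x0 ∂P0, x0 ∈ K := by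
  rw [ae_iff]
  simpa [Set.compl_def] using hK0

lemma integrable_of_cont (hsupp : ∃ K : Set (E n), IsCompact K ∧ P0 Kᶜ = 0)
    {F : Type*} [NormedAddCommGroup F] {f : E n → F} (hf : Continuous f) :
    Integrable f P0 := by
  obtain ⟨K, hK, hK0⟩ := hsupp
  obtain ⟨Cb, hCb⟩ := hK.exists_bound_of_continuousOn hf.continuousOn
  exact (integrable_const Cb).mono' hf.aestronglyMeasurable
    ((ae_mem_of_compl_null hK0).mono fun x hx => hCb x hx)

lemma integral_pos_of (hsupp : ∃ K : Set (E n), IsCompact K ∧ P0 Kᶜ = 0)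
    {f : E n → ℝ} (hf : Continuous f) (hfpos : ∀ y, 0 < f y) :
    0 < ∫ x0, f x0 ∂P0 := by
  obtain ⟨K, hK, hK0⟩ := hsupp
  have hKne : K.Nonempty := by
    rcases K.eq_empty_or_nonempty with h | h
    · exfalso
      rw [h, Set.compl_empty] at hK0
      have h1 : P0 Set.univ = 1 := measure_univ
      rw [hK0] at h1
      exact zero_ne_one h1
    · exact h
  obtain ⟨x0m, hx0m, hmin⟩ := hK.exists_isMinOn hKne hf.continuousOn
  have hε : 0 < f x0m := hfpos x0m
  have hint : Integrable f P0 := integrable_of_cont ⟨K, hK, hK0⟩ hf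
  have h1 : f x0m ≤ ∫ x0, f x0 ∂P0 := by
    have h2 := integral_mono_ae (integrable_const (f x0m)) hint
      ((ae_mem_of_compl_null hK0).mono fun y hy => hmin hy)
    simpa [measure_univ] using h2
  linarith

end meas

end MiyasawaAux
set_option maxHeartbeats 1000000 in
/-- Second-order Miyasawa relation: `α Cov[x₀ | x] = σ² (I + σ² ∇² log q(x))`
(stated in bilinear form), and in particular `I + σ² ∇² log q(x)` is positive
semidefinite. -/
theorem miyasawa_second_order (n : ℕ) (σ α : ℝ) (hσ : 0 < σ) (hα : 0 < α)
    (P0 : Measure (EuclideanSpace ℝ (Fin n))) [IsProbabilityMeasure P0]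
    (hsupp : ∃ K : Set (EuclideanSpace ℝ (Fin n)), IsCompact K ∧ P0 Kᶜ = 0)
    (φ : EuclideanSpace ℝ (Fin n) → ℝ)
    (hφ : ∀ z, φ z = (2 * Real.pi * σ ^ 2) ^ (-(n : ℝ) / 2) *
      Real.exp (-‖z‖ ^ 2 / (2 * σ ^ 2)))
    (q : EuclideanSpace ℝ (Fin n) → ℝ)
    (hq : ∀ x, q x = ∫ x0, φ (x - Real.sqrt α • x0) ∂P0)
    (m : EuclideanSpace ℝ (Fin n) → EuclideanSpace ℝ (Fin n))
    (hm : ∀ x, m x = (q x)⁻¹ • ∫ x0, φ (x - Real.sqrt α • x0) • x0 ∂P0)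
    (H : EuclideanSpace ℝ (Fin n) →
      EuclideanSpace ℝ (Fin n) →L[ℝ] EuclideanSpace ℝ (Fin n))
    (hH : ∀ x, H x = fderiv ℝ (fun y => gradient (fun z => Real.log (q z)) y) x) :
    (∀ x u v,
      α * ((q x)⁻¹ * ∫ x0, φ (x - Real.sqrt α • x0) *
          (⟪x0 - m x, u⟫ * ⟪x0 - m x, v⟫) ∂P0) =
        σ ^ 2 * (⟪u, v⟫ + σ ^ 2 * ⟪H x u, v⟫)) ∧
    (∀ x u, 0 ≤ ‖u‖ ^ 2 + σ ^ 2 * ⟪H x u, u⟫) := by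
  have hs2 : (0:ℝ) < σ ^ 2 := by positivity
  have hσ2ne : (σ:ℝ) ^ 2 ≠ 0 := ne_of_gt hs2
  have hφc : Continuous φ := MiyasawaAux.gauss_cont hφ
  have hφpos : ∀ z, 0 < φ z := MiyasawaAux.gauss_pos hσ hφ
  set sa := Real.sqrt α with hsa
  have hsa2 : sa * sa = α := Real.mul_self_sqrt hα.le
  have hcz : ∀ x : EuclideanSpace ℝ (Fin n),
      Continuous fun x0 : EuclideanSpace ℝ (Fin n) => x - sa • x0 :=
    fun x => continuous_const.sub (continuous_id.const_smul sa)
  have hcψ : ∀ x, Continuous fun x0 => φ (x - sa • x0) := fun x => hφc.comp (hcz x)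
  have hqpos : ∀ x, 0 < q x := fun x => by
    rw [hq x]
    exact MiyasawaAux.integral_pos_of hsupp (hcψ x) (fun y => hφpos _)
  have hIψ : ∀ x, Integrable (fun x0 => φ (x - sa • x0)) P0 :=
    fun x => MiyasawaAux.integrable_of_cont hsupp (hcψ x)
  have hIgrad : ∀ x, Integrable (fun x0 => MiyasawaAux.grad1 σ φ (x - sa • x0)) P0 :=
    fun x => MiyasawaAux.integrable_of_cont hsupp ((MiyasawaAux.grad1_cont hφc).comp (hcz x))
  have hIW2 : ∀ x, Integrable (fun x0 => MiyasawaAux.W2 σ φ (x - sa • x0)) P0 :=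
    fun x => MiyasawaAux.integrable_of_cont hsupp ((MiyasawaAux.W2_cont hφc).comp (hcz x))
  -- generic: inner with a constant on the right commutes with the integral
  have hinner_int : ∀ (f : EuclideanSpace ℝ (Fin n) → EuclideanSpace ℝ (Fin n)),
      Integrable f P0 → ∀ w : EuclideanSpace ℝ (Fin n),
      ∫ x0, ⟪f x0, w⟫ ∂P0 = ⟪∫ x0, f x0 ∂P0, w⟫ := by
    intro f hf w
    calc ∫ x0, ⟪f x0, w⟫ ∂P0 = ∫ x0, ⟪w, f x0⟫ ∂P0 := by
          simp only [fun x0 => real_inner_comm w (f x0)]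
      _ = ⟪w, ∫ x0, f x0 ∂P0⟫ := integral_inner hf w
      _ = ⟪∫ x0, f x0 ∂P0, w⟫ := real_inner_comm _ _
  set V : EuclideanSpace ℝ (Fin n) → EuclideanSpace ℝ (Fin n) :=
    fun y => ∫ x0, MiyasawaAux.grad1 σ φ (y - sa • x0) ∂P0 with hV
  set DV : EuclideanSpace ℝ (Fin n) → (EuclideanSpace ℝ (Fin n) →L[ℝ] EuclideanSpace ℝ (Fin n)) :=
    fun y => ∫ x0, MiyasawaAux.W2 σ φ (y - sa • x0) ∂P0 with hDV
  -- derivative of q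
  have hqderiv : ∀ x, HasFDerivAt q (innerSL ℝ (V x)) x := by
    intro x
    have hmain : HasFDerivAt (fun y => ∫ x0, φ (y - sa • x0) ∂P0)
        (∫ x0, innerSL ℝ (MiyasawaAux.grad1 σ φ (x - sa • x0)) ∂P0) x := by
      apply hasFDerivAt_integral_of_dominated_of_fderiv_le (s := Metric.ball x 1)
        (bound := fun _ => 2 * MiyasawaAux.C n σ / σ)
        (F' := fun y x0 => innerSL ℝ (MiyasawaAux.grad1 σ φ (y - sa • x0))) (Metric.ball_mem_nhds x one_pos)
      · exact .of_forall fun y => (hcψ y).aestronglyMeasurable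
      · exact hIψ x
      · exact ((innerSL ℝ).continuous.comp
          ((MiyasawaAux.grad1_cont hφc).comp (hcz x))).aestronglyMeasurable
      · refine .of_forall fun x0 y _ => ?_
        rw [innerSL_apply_norm]
        exact MiyasawaAux.grad1_norm_le hσ hφ _
      · exact integrable_const _
      · refine .of_forall fun x0 y _ => ?_
        have h := (MiyasawaAux.gauss_hasFDerivAt hσ hφ (y - sa • x0)).comp y
          ((hasFDerivAt_id y).sub_const (sa • x0))
        simpa [Function.comp_def] using h
    have hEq : (∫ x0, innerSL ℝ (MiyasawaAux.grad1 σ φ (x - sa • x0)) ∂P0)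
        = innerSL ℝ (V x) := by
      ext w
      have hIi : Integrable (fun x0 => innerSL ℝ (MiyasawaAux.grad1 σ φ (x - sa • x0))) P0 :=
        MiyasawaAux.integrable_of_cont hsupp
          ((innerSL ℝ).continuous.comp ((MiyasawaAux.grad1_cont hφc).comp (hcz x)))
      rw [ContinuousLinearMap.integral_apply hIi]
      simp only [innerSL_apply_apply]
      exact hinner_int _ (hIgrad x) w
    have hqe : q = fun y => ∫ x0, φ (y - sa • x0) ∂P0 := funext hq
    rw [hqe, ← hEq]
    exact hmain
  -- derivative of V
  have hVderiv : ∀ x, HasFDerivAt V (DV x) x := by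
    intro x
    rw [hV, hDV]
    apply hasFDerivAt_integral_of_dominated_of_fderiv_le (s := Metric.ball x 1)
      (bound := fun _ => 3 * MiyasawaAux.C n σ / σ ^ 2)
      (F' := fun y x0 => MiyasawaAux.W2 σ φ (y - sa • x0)) (Metric.ball_mem_nhds x one_pos)
    · exact .of_forall fun y =>
        ((MiyasawaAux.grad1_cont hφc).comp (hcz y)).aestronglyMeasurable
    · exact hIgrad x
    · exact ((MiyasawaAux.W2_cont hφc).comp (hcz x)).aestronglyMeasurable
    · exact .of_forall fun x0 y _ => MiyasawaAux.W2_norm_le hσ hφ _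
    · exact integrable_const _
    · refine .of_forall fun x0 y _ => ?_
      have h := (MiyasawaAux.grad1_hasFDerivAt hσ hφ (y - sa • x0)).comp y
        ((hasFDerivAt_id y).sub_const (sa • x0))
      simpa [Function.comp_def] using h
  -- gradient of log q
  have hlog : ∀ y, gradient (fun z => Real.log (q z)) y = (q y)⁻¹ • V y := by
    intro y
    have h1 : HasFDerivAt (fun z => Real.log (q z)) ((q y)⁻¹ • innerSL ℝ (V y)) y :=
      (hqderiv y).log (ne_of_gt (hqpos y))
    have h2 : HasGradientAt (fun z => Real.log (q z)) ((q y)⁻¹ • V y) y := by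
      rw [hasGradientAt_iff_hasFDerivAt]
      have h3 : (InnerProductSpace.toDual ℝ (EuclideanSpace ℝ (Fin n))) ((q y)⁻¹ • V y)
          = (q y)⁻¹ • innerSL ℝ (V y) := by
        ext w
        simp [real_inner_smul_left, innerSL_apply_apply]
      rw [h3]
      exact h1
    exact h2.gradient
  -- formula for H
  have hHx : ∀ x, H x = (q x)⁻¹ • DV x
      + ((-((q x) ^ 2)⁻¹) • innerSL ℝ (V x)).smulRight (V x) := by
    intro x
    have hinv : HasFDerivAt (fun y => (q y)⁻¹) ((-((q x) ^ 2)⁻¹) • innerSL ℝ (V x)) x := by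
      have h := (hasDerivAt_inv (ne_of_gt (hqpos x))).comp_hasFDerivAt x (hqderiv x)
      exact h
    have hR : HasFDerivAt (fun y => (q y)⁻¹ • V y)
        ((q x)⁻¹ • DV x + ((-((q x) ^ 2)⁻¹) • innerSL ℝ (V x)).smulRight (V x)) x :=
      hinv.smul (hVderiv x)
    rw [hH x, funext hlog, hR.fderiv]
  have key : ∀ x u v,
      α * ((q x)⁻¹ * ∫ x0, φ (x - sa • x0) * (⟪x0 - m x, u⟫ * ⟪x0 - m x, v⟫) ∂P0) =
        σ ^ 2 * (⟪u, v⟫ + σ ^ 2 * ⟪H x u, v⟫) := by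
    intro x u v
    have hQ := hqpos x
    have hQne : q x ≠ 0 := ne_of_gt hQ
    have hIzw : ∀ w : EuclideanSpace ℝ (Fin n),
        Integrable (fun x0 => φ (x - sa • x0) * ⟪x - sa • x0, w⟫) P0 :=
      fun w => MiyasawaAux.integrable_of_cont hsupp
        ((hcψ x).mul ((hcz x).inner continuous_const))
    have hIzuzv : Integrable
        (fun x0 => φ (x - sa • x0) * (⟪x - sa • x0, u⟫ * ⟪x - sa • x0, v⟫)) P0 :=
      MiyasawaAux.integrable_of_cont hsupp
        ((hcψ x).mul (((hcz x).inner continuous_const).mul ((hcz x).inner continuous_const)))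
    have hIx0w : ∀ w : EuclideanSpace ℝ (Fin n),
        Integrable (fun x0 => φ (x - sa • x0) * ⟪x0, w⟫) P0 :=
      fun w => MiyasawaAux.integrable_of_cont hsupp
        ((hcψ x).mul (continuous_id.inner continuous_const))
    have hIψx0 : Integrable (fun x0 => φ (x - sa • x0) • x0) P0 :=
      MiyasawaAux.integrable_of_cont hsupp ((hcψ x).smul continuous_id)
    have hVw : ∀ w, ⟪V x, w⟫
        = -(σ ^ 2)⁻¹ * ∫ x0, φ (x - sa • x0) * ⟪x - sa • x0, w⟫ ∂P0 := by
      intro w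
      rw [hV]
      rw [← hinner_int _ (hIgrad x) w, ← integral_const_mul]
      refine integral_congr_ae (.of_forall fun x0 => ?_)
      simp only [MiyasawaAux.grad1, real_inner_smul_left]
      ring
    have hMw : ∀ w, ⟪(∫ x0, φ (x - sa • x0) • x0 ∂P0 : EuclideanSpace ℝ (Fin n)), w⟫
        = ∫ x0, φ (x - sa • x0) * ⟪x0, w⟫ ∂P0 := by
      intro w
      rw [← hinner_int _ hIψx0 w]
      refine integral_congr_ae (.of_forall fun x0 => ?_)
      simp only []
      rw [real_inner_smul_left]
    have hpw : ∀ w, ⟪x - sa • m x, w⟫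
        = ⟪x, w⟫ - sa * ((q x)⁻¹ * ∫ x0, φ (x - sa • x0) * ⟪x0, w⟫ ∂P0) := by
      intro w
      rw [hm x, inner_sub_left, real_inner_smul_left, real_inner_smul_left, hMw w]
    have hBw : ∀ w, (∫ x0, φ (x - sa • x0) * ⟪x - sa • x0, w⟫ ∂P0)
        = ⟪x - sa • m x, w⟫ * q x := by
      intro w
      have h1 : (fun x0 => φ (x - sa • x0) * ⟪x - sa • x0, w⟫)
          = fun x0 => ⟪x, w⟫ * φ (x - sa • x0) - sa * (φ (x - sa • x0) * ⟪x0, w⟫) := by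
        funext x0
        rw [inner_sub_left, real_inner_smul_left]
        ring
      rw [h1, integral_sub ((hIψ x).const_mul _) ((hIx0w w).const_mul _),
        integral_const_mul, integral_const_mul, hpw w, ← hq x]
      field_simp
      try ring
    have hDVuv : ⟪DV x u, v⟫ = ((σ ^ 2)⁻¹) ^ 2 *
          (∫ x0, φ (x - sa • x0) * (⟪x - sa • x0, u⟫ * ⟪x - sa • x0, v⟫) ∂P0)
        - (σ ^ 2)⁻¹ * (q x * ⟪u, v⟫) := by
      have hIW2u : Integrable (fun x0 => MiyasawaAux.W2 σ φ (x - sa • x0) u) P0 :=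
        MiyasawaAux.integrable_of_cont hsupp
          ((ContinuousLinearMap.apply ℝ (EuclideanSpace ℝ (Fin n)) u).continuous.comp
            ((MiyasawaAux.W2_cont hφc).comp (hcz x)))
      have h1 : DV x u = ∫ x0, MiyasawaAux.W2 σ φ (x - sa • x0) u ∂P0 := by
        rw [hDV]
        exact ContinuousLinearMap.integral_apply (hIW2 x) u
      rw [h1, ← hinner_int _ hIW2u v]
      have h2 : (fun x0 => ⟪MiyasawaAux.W2 σ φ (x - sa • x0) u, v⟫)
          = fun x0 => ((σ ^ 2)⁻¹) ^ 2 *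
              (φ (x - sa • x0) * (⟪x - sa • x0, u⟫ * ⟪x - sa • x0, v⟫))
            - (σ ^ 2)⁻¹ * (φ (x - sa • x0) * ⟪u, v⟫) := by
        funext x0
        exact MiyasawaAux.W2_inner u v (x - sa • x0)
      rw [h2, integral_sub (hIzuzv.const_mul _) (((hIψ x).mul_const _).const_mul _),
        integral_const_mul, integral_const_mul, integral_mul_const, ← hq x]
    have hcov : α * (∫ x0, φ (x - sa • x0) * (⟪x0 - m x, u⟫ * ⟪x0 - m x, v⟫) ∂P0)
        = ⟪x - sa • m x, u⟫ * ⟪x - sa • m x, v⟫ * q x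
          - ⟪x - sa • m x, u⟫ * (∫ x0, φ (x - sa • x0) * ⟪x - sa • x0, v⟫ ∂P0)
          - ⟪x - sa • m x, v⟫ * (∫ x0, φ (x - sa • x0) * ⟪x - sa • x0, u⟫ ∂P0)
          + ∫ x0, φ (x - sa • x0) * (⟪x - sa • x0, u⟫ * ⟪x - sa • x0, v⟫) ∂P0 := by
      have hkey : ∀ (x0 w : EuclideanSpace ℝ (Fin n)),
          sa * ⟪x0 - m x, w⟫ = ⟪x - sa • m x, w⟫ - ⟪x - sa • x0, w⟫ := by
        intro x0 w
        simp only [inner_sub_left, real_inner_smul_left]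
        ring
      rw [← integral_const_mul]
      have h1 : (fun x0 => α * (φ (x - sa • x0) * (⟪x0 - m x, u⟫ * ⟪x0 - m x, v⟫)))
          = fun x0 => ⟪x - sa • m x, u⟫ * ⟪x - sa • m x, v⟫ * φ (x - sa • x0)
            - ⟪x - sa • m x, u⟫ * (φ (x - sa • x0) * ⟪x - sa • x0, v⟫)
            - ⟪x - sa • m x, v⟫ * (φ (x - sa • x0) * ⟪x - sa • x0, u⟫)
            + φ (x - sa • x0) * (⟪x - sa • x0, u⟫ * ⟪x - sa • x0, v⟫) := by
        funext x0
        have hu := hkey x0 u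
        have hv := hkey x0 v
        calc α * (φ (x - sa • x0) * (⟪x0 - m x, u⟫ * ⟪x0 - m x, v⟫))
            = φ (x - sa • x0) * ((sa * ⟪x0 - m x, u⟫) * (sa * ⟪x0 - m x, v⟫)) := by
              rw [← hsa2]; ring
          _ = φ (x - sa • x0) * ((⟪x - sa • m x, u⟫ - ⟪x - sa • x0, u⟫)
                * (⟪x - sa • m x, v⟫ - ⟪x - sa • x0, v⟫)) := by rw [hu, hv]
          _ = _ := by ring
      have hA : Integrable (fun x0 => ⟪x - sa • m x, u⟫ * ⟪x - sa • m x, v⟫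
          * φ (x - sa • x0)) P0 := (hIψ x).const_mul _
      have hB : Integrable (fun x0 => ⟪x - sa • m x, u⟫
          * (φ (x - sa • x0) * ⟪x - sa • x0, v⟫)) P0 := (hIzw v).const_mul _
      have hC : Integrable (fun x0 => ⟪x - sa • m x, v⟫
          * (φ (x - sa • x0) * ⟪x - sa • x0, u⟫)) P0 := (hIzw u).const_mul _
      have hAB : Integrable (fun x0 => ⟪x - sa • m x, u⟫ * ⟪x - sa • m x, v⟫
          * φ (x - sa • x0)
          - ⟪x - sa • m x, u⟫ * (φ (x - sa • x0) * ⟪x - sa • x0, v⟫)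
          - ⟪x - sa • m x, v⟫ * (φ (x - sa • x0) * ⟪x - sa • x0, u⟫)) P0 :=
        (hA.sub hB).sub hC
      have hAsubB : Integrable (fun x0 => ⟪x - sa • m x, u⟫ * ⟪x - sa • m x, v⟫
          * φ (x - sa • x0)
          - ⟪x - sa • m x, u⟫ * (φ (x - sa • x0) * ⟪x - sa • x0, v⟫)) P0 := hA.sub hB
      rw [h1, integral_add hAB hIzuzv, integral_sub hAsubB hC, integral_sub hA hB,
        integral_const_mul, integral_const_mul, integral_const_mul, ← hq x]
    have hHuv : ⟪H x u, v⟫ = (q x)⁻¹ * ⟪DV x u, v⟫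
        + (-((q x) ^ 2)⁻¹ * ⟪V x, u⟫) * ⟪V x, v⟫ := by
      rw [hHx x]
      simp only [ContinuousLinearMap.add_apply, ContinuousLinearMap.coe_smul',
        Pi.smul_apply, ContinuousLinearMap.smulRight_apply,
        ContinuousLinearMap.smul_apply, innerSL_apply_apply, inner_add_left,
        real_inner_smul_left, smul_eq_mul]
      try ring
    rw [show α * ((q x)⁻¹ * (∫ x0, φ (x - sa • x0) * (⟪x0 - m x, u⟫ * ⟪x0 - m x, v⟫) ∂P0))
        = (q x)⁻¹ * (α * ∫ x0, φ (x - sa • x0) * (⟪x0 - m x, u⟫ * ⟪x0 - m x, v⟫) ∂P0)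
        from by ring]
    rw [hcov, hHuv, hDVuv, hVw u, hVw v, hBw u, hBw v]
    field_simp
    ring
  refine ⟨key, fun x u => ?_⟩
  have h := key x u u
  have hnn : 0 ≤ α * ((q x)⁻¹ *
      ∫ x0, φ (x - sa • x0) * (⟪x0 - m x, u⟫ * ⟪x0 - m x, u⟫) ∂P0) := by
    apply mul_nonneg hα.le
    apply mul_nonneg (inv_nonneg.mpr (hqpos x).le)
    apply integral_nonneg
    intro x0
    exact mul_nonneg (hφpos _).le (mul_self_nonneg _)
  rw [h] at hnn
  have h2 : 0 ≤ ⟪u, u⟫ + σ ^ 2 * ⟪H x u, u⟫ := by nlinarith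
  rwa [real_inner_self_eq_norm_sq] at h2
end
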